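/- arXiv:2601.16898 — 2 statements merged into one kernel-verified Lean document; each statement's English description precedes it below -/
import Mathlib

section
/- If W satisfies the minimal constraints, W·ln W, W², and W³ are integrable, and t + t²/2 + Var(X)/2 ≥ 1, where t := 1 − μ/2, μ is the purity of W, and Var(X) := ∫ W(q,p) · (π·W(q,p) − μ/2)² dq dp, then S[W] ≥ 1 + ln π. -/
/-! For `0 < x ≤ 1` the first two terms of the series `-log (1 - y) = ∑ yⁿ⁺¹/(n+1)`, all of
whose terms are nonnegative for `y = 1 - x ≥ 0`, give `log x ≤ (x - 1) - (x - 1)²/2`.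
Applied to `x = π W` and integrated against the density `W`, this bounds `-S[W] + ln π`
by `∫ W (π W - 1) - ½ ∫ W (π W - 1)²`, i.e. by `-t - (t² + Var X)/2` after splitting the
second moment of `X - 1` into variance and squared mean; the hypothesis makes this `≤ -1`. -/

open Real MeasureTheory

lemma Real.log_le_sub_one_sub_sq_div_two {x : ℝ} (hx : 0 < x) (hx1 : x ≤ 1) :
    log x ≤ (x - 1) - (x - 1) ^ 2 / 2 := by
  have hy0 : 0 ≤ 1 - x := by linarith
  have hy1 : |1 - x| < 1 := by rw [abs_of_nonneg hy0]; linarith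
  have hsum := sum_le_hasSum (Finset.range 2) (fun n _ => by positivity)
    (hasSum_pow_div_log_of_abs_lt_one hy1)
  norm_num [Finset.sum_range_succ] at hsum
  linarith

lemma mul_log_le_of_mul_le_one {c w : ℝ} (hc : 0 < c) (hw : 0 ≤ w) (hcw : c * w ≤ 1) :
    w * log w ≤ (-log c - 3 / 2) * w + 2 * c * w ^ 2 - c ^ 2 / 2 * w ^ 3 := by
  rcases hw.eq_or_lt with rfl | hw
  · simp
  have hlog : log w = log (c * w) - log c := by
    rw [log_mul hc.ne' hw.ne']
    ring
  have hquad := mul_le_mul_of_nonneg_left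
    (log_le_sub_one_sub_sq_div_two (mul_pos hc hw) hcw) hw.le
  rw [hlog]
  linarith

section Density

variable {α : Type*} [MeasurableSpace α] {μ : Measure α} {W : α → ℝ}

variable (hnorm : ∫ z, W z ∂μ = 1) (hsq : Integrable (fun z => W z ^ 2) μ)
  (hcube : Integrable (fun z => W z ^ 3) μ)
include hnorm hsq hcube

lemma integrable_add_mul_sq_add_mul_cube (a b d : ℝ) :
    Integrable (fun z => a * W z + b * W z ^ 2 + d * W z ^ 3) μ :=
  (((Integrable.of_integral_ne_zero (by simp [hnorm])).const_mul a).add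
    (hsq.const_mul b)).add (hcube.const_mul d)

lemma integral_add_mul_sq_add_mul_cube (a b d : ℝ) :
    ∫ z, (a * W z + b * W z ^ 2 + d * W z ^ 3) ∂μ
      = a + b * ∫ z, W z ^ 2 ∂μ + d * ∫ z, W z ^ 3 ∂μ := by
  have hW : Integrable W μ := Integrable.of_integral_ne_zero (by simp [hnorm])
  have h1 : Integrable (fun z => a * W z) μ := hW.const_mul a
  have h2 : Integrable (fun z => b * W z ^ 2) μ := hsq.const_mul b
  have h12 : Integrable (fun z => a * W z + b * W z ^ 2) μ := h1.add h2
  rw [integral_add h12 (hcube.const_mul d), integral_add h1 h2,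
    integral_const_mul, integral_const_mul, integral_const_mul, hnorm, mul_one]

lemma integral_mul_log_le_of_mul_le_one {c m : ℝ} (hc : 0 < c) (hpos : ∀ z, 0 ≤ W z)
    (hbound : ∀ z, c * W z ≤ 1) (hlog : Integrable (fun z => W z * log (W z)) μ)
    (hm : c * ∫ z, W z ^ 2 ∂μ = m) :
    ∫ z, W z * log (W z) ∂μ
      ≤ -log c - (1 - m) - ((1 - m) ^ 2 + ∫ z, W z * (c * W z - m) ^ 2 ∂μ) / 2 := by
  have hpoly := integral_add_mul_sq_add_mul_cube hnorm hsq hcube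
  have hentropy : ∫ z, W z * log (W z) ∂μ
      ≤ (-log c - 3 / 2) + 2 * c * ∫ z, W z ^ 2 ∂μ + -(c ^ 2 / 2) * ∫ z, W z ^ 3 ∂μ := by
    rw [← hpoly]
    refine integral_mono hlog (integrable_add_mul_sq_add_mul_cube hnorm hsq hcube _ _ _)
      fun z => ?_
    have hpoint := mul_log_le_of_mul_le_one hc (hpos z) (hbound z)
    linarith
  have hvar : ∫ z, W z * (c * W z - m) ^ 2 ∂μ
      = m ^ 2 + -(2 * c * m) * ∫ z, W z ^ 2 ∂μ + c ^ 2 * ∫ z, W z ^ 3 ∂μ := by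
    rw [← hpoly]
    congr 1
    funext z
    ring
  rw [hvar]
  linear_combination hentropy + (2 - m) * hm

end Density

theorem wigner_conjecture_of_variance_condition_general (W : ℝ × ℝ → ℝ)
    (hpos : ∀ z, 0 ≤ W z)
    (hnorm : ∫ z, W z = 1)
    (hbound : ∀ z, Real.pi * W z ≤ 1)
    (hlog : Integrable (fun z => W z * Real.log (W z)))
    (hsq : Integrable (fun z => (W z) ^ 2))
    (hcube : Integrable (fun z => (W z) ^ 3))
    (hcond : (1 - (2 * Real.pi * ∫ z, (W z) ^ 2) / 2)
        + (1 - (2 * Real.pi * ∫ z, (W z) ^ 2) / 2) ^ 2 / 2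
        + (∫ z, W z * (Real.pi * W z - (2 * Real.pi * ∫ w, (W w) ^ 2) / 2) ^ 2) / 2 ≥ 1) :
    (-∫ z, W z * Real.log (W z)) ≥ 1 + Real.log Real.pi := by
  have hentropy := integral_mul_log_le_of_mul_le_one hnorm hsq hcube pi_pos hpos hbound hlog
    (m := (2 * π * ∫ z, W z ^ 2) / 2) (by ring)
  linarith

/-- If `W` satisfies the minimal constraints, `W·ln W`, `W²`, `W³` are integrable, and
`t + t²/2 + Var(X)/2 ≥ 1` with `t = 1 − μ/2`, `μ = 2π ∫ W²` the purity and
`Var(X) = ∫ W (π W − μ/2)²`, then `S[W] ≥ 1 + ln π`. -/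
theorem wigner_conjecture_of_variance_condition (W : ℝ × ℝ → ℝ) (hmeas : Measurable W)
    (hpos : ∀ z, 0 ≤ W z)
    (hnorm : ∫ z, W z = 1)
    (hbound : ∀ z, Real.pi * W z ≤ 1)
    (hlog : Integrable (fun z => W z * Real.log (W z)))
    (hsq : Integrable (fun z => (W z) ^ 2))
    (hcube : Integrable (fun z => (W z) ^ 3))
    (hcond : (1 - (2 * Real.pi * ∫ z, (W z) ^ 2) / 2)
        + (1 - (2 * Real.pi * ∫ z, (W z) ^ 2) / 2) ^ 2 / 2
        + (∫ z, W z * (Real.pi * W z - (2 * Real.pi * ∫ w, (W w) ^ 2) / 2) ^ 2) / 2 ≥ 1) :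
    (-∫ z, W z * Real.log (W z)) ≥ 1 + Real.log Real.pi :=
  wigner_conjecture_of_variance_condition_general W hpos hnorm hbound hlog hsq hcube hcond
end

section
/- Let v₀ ∈ [0,1]. If W satisfies the minimal constraints, W·ln W, W², and W³ are integrable, Var(X) ≥ v₀ where Var(X) := ∫ W(q,p) · (π·W(q,p) − μ/2)² dq dp, and the purity μ of W satisfies μ ≤ 4 − 2√(3 − v₀), then S[W] ≥ 1 + ln π. -/
open Real MeasureTheory

/-! Write `t = π W ∈ [0, 1]` and `m = μ / 2`. Integrating the Taylor bound
`-ln t ≥ (1 - t) + (1 - t)² / 2` against `W` gives `S[W] ≥ ln π + 3/2 - 2m + π² ∫ W³ / 2`, and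
`π² ∫ W³ = Var(X) + m² ≥ v₀ + m²`. Hence `S[W] - 1 - ln π ≥ ((2 - m)² - (3 - v₀)) / 2`, which is
nonnegative once `m ≤ 2 - √(3 - v₀)`. -/

lemma Real.log_le_sub_one_sub_sq_div_two_s18 {t : ℝ} (ht : 0 < t) (ht1 : t ≤ 1) :
    log t ≤ (t - 1) - (1 - t) ^ 2 / 2 := by
  have hx : |1 - t| < 1 := by rw [abs_lt]; constructor <;> linarith
  have hsum := hasSum_pow_div_log_of_abs_lt_one hx
  have hpartial := sum_le_hasSum (Finset.range 2)
    (fun n _ => div_nonneg (pow_nonneg (by linarith) _) (by positivity)) hsum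
  simp only [sub_sub_cancel, Finset.sum_range_succ, Finset.sum_range_zero] at hpartial
  norm_num at hpartial
  linarith

lemma cubic_le_neg_mul_log {c w : ℝ} (hc : 0 < c) (hw : 0 ≤ w) (hcw : c * w ≤ 1) :
    (log c + 3 / 2) * w - 2 * c * w ^ 2 + c ^ 2 / 2 * w ^ 3 ≤ -(w * log w) := by
  rcases hw.eq_or_lt with rfl | hw
  · simp
  have key := log_le_sub_one_sub_sq_div_two_s18 (mul_pos hc hw) hcw
  rw [log_mul hc.ne' hw.ne'] at key
  nlinarith [mul_le_mul_of_nonneg_left key hw.le]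

section MomentIntegrals

variable {α : Type*} [MeasurableSpace α] {μ : Measure α} {f : α → ℝ}

lemma integral_cubic_combination (hf : Integrable f μ) (hf2 : Integrable (fun x => f x ^ 2) μ)
    (hf3 : Integrable (fun x => f x ^ 3) μ) (a b d : ℝ) :
    ∫ x, (a * f x + b * f x ^ 2 + d * f x ^ 3) ∂μ
      = a * ∫ x, f x ∂μ + b * ∫ x, f x ^ 2 ∂μ + d * ∫ x, f x ^ 3 ∂μ := by
  rw [integral_add (f := fun x => a * f x + b * f x ^ 2) ((hf.const_mul a).add (hf2.const_mul b))
      (hf3.const_mul d), integral_add (hf.const_mul a) (hf2.const_mul b),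
    integral_const_mul, integral_const_mul, integral_const_mul]

lemma integral_mul_sub_sq_eq (hf : Integrable f μ) (hf2 : Integrable (fun x => f x ^ 2) μ)
    (hf3 : Integrable (fun x => f x ^ 3) μ) (hf1 : ∫ x, f x ∂μ = 1) (c a : ℝ) :
    ∫ x, f x * (c * f x - a) ^ 2 ∂μ
      = c ^ 2 * ∫ x, f x ^ 3 ∂μ - 2 * c * a * ∫ x, f x ^ 2 ∂μ + a ^ 2 := by
  have hexpand : (fun x => f x * (c * f x - a) ^ 2)
      = fun x => a ^ 2 * f x + (-2 * c * a) * f x ^ 2 + c ^ 2 * f x ^ 3 := by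
    funext x; ring
  rw [hexpand, integral_cubic_combination hf hf2 hf3, hf1]
  ring

lemma cubic_moment_bound_le_entropy {c : ℝ} (hc : 0 < c) (hf0 : ∀ x, 0 ≤ f x)
    (hfc : ∀ x, c * f x ≤ 1) (hf : Integrable f μ) (hf2 : Integrable (fun x => f x ^ 2) μ)
    (hf3 : Integrable (fun x => f x ^ 3) μ) (hflog : Integrable (fun x => f x * log (f x)) μ)
    (hf1 : ∫ x, f x ∂μ = 1) :
    log c + 3 / 2 - 2 * c * ∫ x, f x ^ 2 ∂μ + c ^ 2 / 2 * ∫ x, f x ^ 3 ∂μ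
      ≤ -∫ x, f x * log (f x) ∂μ := by
  have hmono : ∫ x, ((log c + 3 / 2) * f x + (-2 * c) * f x ^ 2 + c ^ 2 / 2 * f x ^ 3) ∂μ
      ≤ ∫ x, -(f x * log (f x)) ∂μ :=
    integral_mono (((hf.const_mul _).add (hf2.const_mul _)).add (hf3.const_mul _)) hflog.neg
      fun x => by linarith [cubic_le_neg_mul_log hc (hf0 x) (hfc x)]
  rw [integral_neg, integral_cubic_combination hf hf2 hf3, hf1] at hmono
  linarith

end MomentIntegrals

lemma one_le_of_le_two_sub_sqrt {m v b : ℝ} (hm : m ≤ 2 - √(3 - v)) (hv : v ≤ b - m ^ 2) :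
    1 ≤ 3 / 2 - 2 * m + b / 2 := by
  have hdisc : 3 - v ≤ (2 - m) ^ 2 := by
    rcases le_total (3 - v) 0 with hneg | hnonneg
    · nlinarith [sq_nonneg (2 - m)]
    · calc 3 - v = √(3 - v) ^ 2 := (sq_sqrt hnonneg).symm
        _ ≤ (2 - m) ^ 2 := pow_le_pow_left₀ (sqrt_nonneg _) (by linarith) 2
  nlinarith

theorem wigner_conjecture_variance_refined_threshold_general (v₀ : ℝ)
    (W : ℝ × ℝ → ℝ)
    (hpos : ∀ z, 0 ≤ W z)
    (hnorm : ∫ z, W z = 1)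
    (hbound : ∀ z, Real.pi * W z ≤ 1)
    (hlog : Integrable (fun z => W z * Real.log (W z)))
    (hsq : Integrable (fun z => (W z) ^ 2))
    (hcube : Integrable (fun z => (W z) ^ 3))
    (hvar : (∫ z, W z * (Real.pi * W z - (2 * Real.pi * ∫ w, (W w) ^ 2) / 2) ^ 2) ≥ v₀)
    (hmu : 2 * Real.pi * (∫ z, (W z) ^ 2) ≤ 4 - 2 * Real.sqrt (3 - v₀)) :
    (-∫ z, W z * Real.log (W z)) ≥ 1 + Real.log Real.pi := by
  have hint : Integrable W := Integrable.of_integral_ne_zero (by rw [hnorm]; exact one_ne_zero)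
  have hentropy := cubic_moment_bound_le_entropy pi_pos hpos hbound hint hsq hcube hlog hnorm
  rw [integral_mul_sub_sq_eq hint hsq hcube hnorm] at hvar
  have hkey := one_le_of_le_two_sub_sqrt (m := π * ∫ z, W z ^ 2) (b := π ^ 2 * ∫ z, W z ^ 3)
    (v := v₀) (by linarith) (by linarith)
  linarith

/-- Let `v₀ ∈ [0,1]`. If `W` satisfies the minimal constraints, `W·ln W`, `W²`, `W³` are
integrable, `Var(X) ≥ v₀` where `Var(X) = ∫ W (π W − μ/2)²`, and the purity `μ = 2π ∫ W²`
satisfies `μ ≤ 4 − 2√(3 − v₀)`, then `S[W] ≥ 1 + ln π`. -/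
theorem wigner_conjecture_variance_refined_threshold (v₀ : ℝ)
    (hv0 : 0 ≤ v₀) (hv1 : v₀ ≤ 1)
    (W : ℝ × ℝ → ℝ) (hmeas : Measurable W)
    (hpos : ∀ z, 0 ≤ W z)
    (hnorm : ∫ z, W z = 1)
    (hbound : ∀ z, Real.pi * W z ≤ 1)
    (hlog : Integrable (fun z => W z * Real.log (W z)))
    (hsq : Integrable (fun z => (W z) ^ 2))
    (hcube : Integrable (fun z => (W z) ^ 3))
    (hvar : (∫ z, W z * (Real.pi * W z - (2 * Real.pi * ∫ w, (W w) ^ 2) / 2) ^ 2) ≥ v₀)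
    (hmu : 2 * Real.pi * (∫ z, (W z) ^ 2) ≤ 4 - 2 * Real.sqrt (3 - v₀)) :
    (-∫ z, W z * Real.log (W z)) ≥ 1 + Real.log Real.pi :=
  wigner_conjecture_variance_refined_threshold_general v₀ W hpos hnorm hbound hlog hsq hcube hvar
    hmu
end
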